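/- arXiv:1912.04096 — 4 statements merged into one kernel-verified Lean document; each statement's English description precedes it below -/
import Mathlib

section
/- Let X ⊆ ℝⁿ be a nonempty set, U : ℝⁿ → ℝ a function, c ∈ ℝⁿ a vector, and V > 0 a real number. Suppose x* ∈ X maximizes U over X and x^V ∈ X maximizes the perturbed objective x ↦ V·U(x) − ⟨c, x⟩ over X. Then 0 ≤ U(x*) − U(x^V) ≤ ⟨c, x* − x^V⟩/V ≤ ‖c‖·‖x* − x^V‖/V. -/
theorem sub_le_inner_sub_div_of_perturbed_le {E : Type*} [NormedAddCommGroup E]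
    [InnerProductSpace ℝ E] {U : E → ℝ} {c x y : E} {V : ℝ} (hV : 0 < V)
    (h : V * U x - inner ℝ c x ≤ V * U y - inner ℝ c y) :
    U x - U y ≤ inner ℝ c (x - y) / V := by
  rw [inner_sub_right, le_div_iff₀ hV]
  linarith

theorem stmt_3_general (n : ℕ) (X : Set (EuclideanSpace ℝ (Fin n)))
    (U : EuclideanSpace ℝ (Fin n) → ℝ) (c : EuclideanSpace ℝ (Fin n))
    (V : ℝ) (hV : 0 < V)
    (xstar xV : EuclideanSpace ℝ (Fin n))
    (hxstar : xstar ∈ X) (hxV : xV ∈ X)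
    (hmax : ∀ x ∈ X, U x ≤ U xstar)
    (hmaxV : ∀ x ∈ X, V * U x - (inner ℝ c x : ℝ) ≤ V * U xV - (inner ℝ c xV : ℝ)) :
    0 ≤ U xstar - U xV ∧
    U xstar - U xV ≤ (inner ℝ c (xstar - xV) : ℝ) / V ∧
    (inner ℝ c (xstar - xV) : ℝ) / V ≤ ‖c‖ * ‖xstar - xV‖ / V :=
  ⟨sub_nonneg.2 (hmax xV hxV),
    sub_le_inner_sub_div_of_perturbed_le hV (hmaxV xstar hxstar),
    div_le_div_of_nonneg_right (real_inner_le_norm c _) hV.le⟩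

/-- Utility gap of the perturbed NUM optimizer: if `x*` maximizes `U` over `X` and
`x^V` maximizes `V·U(x) − ⟪c, x⟫` over `X`, then
`0 ≤ U(x*) − U(x^V) ≤ ⟪c, x* − x^V⟫/V ≤ ‖c‖·‖x* − x^V‖/V`. -/
theorem stmt_3 (n : ℕ) (X : Set (EuclideanSpace ℝ (Fin n))) (hX : X.Nonempty)
    (U : EuclideanSpace ℝ (Fin n) → ℝ) (c : EuclideanSpace ℝ (Fin n))
    (V : ℝ) (hV : 0 < V)
    (xstar xV : EuclideanSpace ℝ (Fin n))
    (hxstar : xstar ∈ X) (hxV : xV ∈ X)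
    (hmax : ∀ x ∈ X, U x ≤ U xstar)
    (hmaxV : ∀ x ∈ X, V * U x - (inner ℝ c x : ℝ) ≤ V * U xV - (inner ℝ c xV : ℝ)) :
    0 ≤ U xstar - U xV ∧
    U xstar - U xV ≤ (inner ℝ c (xstar - xV) : ℝ) / V ∧
    (inner ℝ c (xstar - xV) : ℝ) / V ≤ ‖c‖ * ‖xstar - xV‖ / V :=
  stmt_3_general n X U c V hV xstar xV hxstar hxV hmax hmaxV
end

section
/- Let X ⊆ ℝⁿ be a nonempty compact convex set, U : ℝⁿ → ℝ a continuous function that is strictly concave on X, and c ∈ ℝⁿ a fixed vector. Let x* be the (unique) maximizer of U over X, and for each V > 0 let x^V be any maximizer of x ↦ V·U(x) − ⟨c, x⟩ over X. Then x^V converges to x* as V → ∞; that is, for every ε > 0 there exists V₀ such that for all V ≥ V₀, ‖x^V − x*‖ < ε. -/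
/-!
Comparing `x^V` with `x*` in the perturbed objective gives
`V (U x* - U x^V) ≤ ⟪c, x*⟫ - ⟪c, x^V⟫ ≤ 2M`, where `M` bounds `|⟪c, ·⟫|` on the compact set `X`;
hence `U x^V → U x*`. Since `X` is compact, `U` is continuous and, by strict concavity, `x*` is the
only point of `X` where `U` attains `U x*`, every cluster point of `x^V` is `x*`, so `x^V → x*`.
-/

open Filter Topology

theorem IsCompact.tendsto_nhds_of_tendsto_comp {X Y ι : Type*} [TopologicalSpace X]
    [TopologicalSpace Y] [T2Space Y] {K : Set X} {f : X → Y} {u : ι → X} {l : Filter ι} {a : X}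
    (hK : IsCompact K) (hf : Continuous f) (hfa : ∀ x ∈ K, f x = f a → x = a)
    (hu : ∀ᶠ i in l, u i ∈ K) (hfu : Tendsto (f ∘ u) l (𝓝 (f a))) : Tendsto u l (𝓝 a) := by
  refine hK.tendsto_nhds_of_unique_mapClusterPt hu fun x hxK hx => hfa x hxK ?_
  exact eq_of_nhds_neBot (ClusterPt.mono (hx.continuousAt_comp hf.continuousAt) hfu).neBot

theorem sub_le_of_isMaxOn_mul_sub {α : Type*} {s : Set α} {U g : α → ℝ} {V M : ℝ} {a b : α}
    (hV : 0 < V) (hg : ∀ x ∈ s, |g x| ≤ M) (ha : a ∈ s) (hb : b ∈ s)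
    (hbmax : IsMaxOn (fun x => V * U x - g x) s b) : U a - U b ≤ 2 * M / V := by
  have hcompare : V * (U a - U b) ≤ g a - g b := by
    have := isMaxOn_iff.1 hbmax a ha
    linarith
  rw [le_div_iff₀ hV, mul_comm]
  linarith [abs_le.1 (hg a ha), abs_le.1 (hg b hb)]

theorem tendsto_apply_of_isMaxOn_mul_sub {α : Type*} {s : Set α} {U g : α → ℝ} {M : ℝ} {a : α}
    {b : ℝ → α} (hg : ∀ x ∈ s, |g x| ≤ M) (ha : a ∈ s) (hamax : IsMaxOn U s a)
    (hb : ∀ V > 0, b V ∈ s) (hbmax : ∀ V > 0, IsMaxOn (fun x => V * U x - g x) s (b V)) :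
    Tendsto (fun V => U (b V)) atTop (𝓝 (U a)) := by
  have hlower : Tendsto (fun V : ℝ => U a - 2 * M / V) atTop (𝓝 (U a)) := by
    simpa using tendsto_const_nhds.sub ((tendsto_const_nhds (x := 2 * M)).div_atTop tendsto_id)
  refine tendsto_of_tendsto_of_tendsto_of_le_of_le' hlower tendsto_const_nhds ?_ ?_
  · filter_upwards [eventually_gt_atTop 0] with V hV
    linarith [sub_le_of_isMaxOn_mul_sub hV hg ha (hb V hV) (hbmax V hV)]
  · filter_upwards [eventually_gt_atTop 0] with V hV
    exact isMaxOn_iff.1 hamax _ (hb V hV)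

theorem stmt_4_general (n : ℕ) (X : Set (EuclideanSpace ℝ (Fin n)))
    (hXcomp : IsCompact X)
    (U : EuclideanSpace ℝ (Fin n) → ℝ) (hUcont : Continuous U)
    (hUconc : StrictConcaveOn ℝ X U)
    (c : EuclideanSpace ℝ (Fin n))
    (xstar : EuclideanSpace ℝ (Fin n)) (hxstar : xstar ∈ X)
    (hmax : ∀ x ∈ X, U x ≤ U xstar)
    (xV : ℝ → EuclideanSpace ℝ (Fin n))
    (hxVmem : ∀ V : ℝ, 0 < V → xV V ∈ X)
    (hxVmax : ∀ V : ℝ, 0 < V → ∀ x ∈ X,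
      V * U x - (inner ℝ c x : ℝ) ≤ V * U (xV V) - (inner ℝ c (xV V) : ℝ)) :
    ∀ ε > 0, ∃ V₀ : ℝ, 0 < V₀ ∧ ∀ V : ℝ, V₀ ≤ V → ‖xV V - xstar‖ < ε := by
  have hxstarmax : IsMaxOn U X xstar := isMaxOn_iff.2 hmax
  obtain ⟨M, hM⟩ := hXcomp.exists_bound_of_continuousOn
    (f := fun x => (inner ℝ c x : ℝ)) (by fun_prop)
  have hvalues : Tendsto (fun V => U (xV V)) atTop (𝓝 (U xstar)) :=
    tendsto_apply_of_isMaxOn_mul_sub hM hxstar hxstarmax hxVmem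
      fun V hV => isMaxOn_iff.2 (hxVmax V hV)
  have hunique : ∀ x ∈ X, U x = U xstar → x = xstar := fun x hx hUx =>
    hUconc.eq_of_isMaxOn (isMaxOn_iff.2 fun y hy => hUx ▸ hmax y hy) hxstarmax hx hxstar
  have hlim : Tendsto xV atTop (𝓝 xstar) :=
    hXcomp.tendsto_nhds_of_tendsto_comp hUcont hunique
      ((eventually_gt_atTop 0).mono hxVmem) hvalues
  intro ε hε
  obtain ⟨V₀, hV₀⟩ := Metric.tendsto_atTop.1 hlim ε hε
  exact ⟨max V₀ 1, by positivity, fun V hV => by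
    simpa [dist_eq_norm] using hV₀ V (le_of_max_le_left hV)⟩

/-- Convergence of the perturbed NUM maximizers: on a nonempty compact convex `X`,
with `U` continuous and strictly concave on `X`, the maximizers `x^V` of
`V·U(x) − ⟪c, x⟫` converge to the maximizer `x*` of `U` as `V → ∞`. -/
theorem stmt_4 (n : ℕ) (X : Set (EuclideanSpace ℝ (Fin n))) (hX : X.Nonempty)
    (hXcomp : IsCompact X) (hXconv : Convex ℝ X)
    (U : EuclideanSpace ℝ (Fin n) → ℝ) (hUcont : Continuous U)
    (hUconc : StrictConcaveOn ℝ X U)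
    (c : EuclideanSpace ℝ (Fin n))
    (xstar : EuclideanSpace ℝ (Fin n)) (hxstar : xstar ∈ X)
    (hmax : ∀ x ∈ X, U x ≤ U xstar)
    (xV : ℝ → EuclideanSpace ℝ (Fin n))
    (hxVmem : ∀ V : ℝ, 0 < V → xV V ∈ X)
    (hxVmax : ∀ V : ℝ, 0 < V → ∀ x ∈ X,
      V * U x - (inner ℝ c x : ℝ) ≤ V * U (xV V) - (inner ℝ c (xV V) : ℝ)) :
    ∀ ε > 0, ∃ V₀ : ℝ, 0 < V₀ ∧ ∀ V : ℝ, V₀ ≤ V → ‖xV V - xstar‖ < ε :=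
  stmt_4_general n X hXcomp U hUcont hUconc c xstar hxstar hmax xV hxVmem hxVmax
end

section
/- Let N be a finite set of nodes and A : N → Finset N a symmetric adjacency structure (m ∈ A(n) ↔ n ∈ A(m), n ∉ A(n), and A(n) nonempty for every n). Let b : N × N → {0,1} be binary link-activation variables supported on adjacent pairs (b(n,m) = 0 whenever m ∉ A(n)). Then b satisfies the linear constraints b(n,m) + (1/|A(n)|)·∑_{m' ∈ A(n)} b(m',n) ≤ 1 for all n ∈ N and all m ∈ A(n), if and only if there exists a state assignment s : N → {0,1} such that b(n,m) = 1 implies s(n) = 1 and s(m) = 0 (i.e., the set of active links forms a Directed Bipartite SubGraph, with every active link going from a node in transmit state to a node in receive state). -/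
/-!
A state assignment sending every active link from a transmitter to a receiver exists exactly when
no node is both the head and the tail of active links: transmitters are then the nodes with an
active outgoing link. The linear constraint at a link `(n, m)` forbids precisely this. If
`b(n,m) = 1`, the constraint leaves no room for the incoming average at `n`, which is positive as
soon as one incoming link is active; if `b(n,m) = 0`, it holds because the average of binary
values is at most one.
-/

open Finset

theorem exists_state_iff_forall_not_chain {N : Type*} (r : N → N → Prop) :
    (∃ s : N → Bool, ∀ n m, r n m → s n = true ∧ s m = false) ↔
      ∀ n m k, r n m → ¬ r m k := by
  classical
  constructor
  · rintro ⟨s, hs⟩ n m k hnm hmk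
    simpa [(hs n m hnm).2] using (hs m k hmk).1
  · intro h
    refine ⟨fun n => decide (∃ m, r n m), fun n m hnm => ⟨?_, ?_⟩⟩
    · exact decide_eq_true ⟨m, hnm⟩
    · exact decide_eq_false fun ⟨k, hmk⟩ => h n m k hnm hmk

theorem one_div_card_mul_sum_le_one {ι : Type*} {s : Finset ι} {f : ι → ℝ}
    (hf : ∀ i ∈ s, f i ≤ 1) : 1 / (#s : ℝ) * ∑ i ∈ s, f i ≤ 1 := by
  rcases s.eq_empty_or_nonempty with rfl | hs
  · simp
  have hcard : (0 : ℝ) < #s := by exact_mod_cast hs.card_pos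
  rw [one_div, inv_mul_le_iff₀ hcard, mul_one]
  simpa using sum_le_sum hf

theorem one_div_card_mul_sum_pos {ι : Type*} {s : Finset ι} {f : ι → ℝ}
    (hf : ∀ i ∈ s, 0 ≤ f i) {j : ι} (hj : j ∈ s) (hfj : 0 < f j) :
    0 < 1 / (#s : ℝ) * ∑ i ∈ s, f i := by
  have hcard : (0 : ℝ) < #s := by exact_mod_cast card_pos.2 ⟨j, hj⟩
  exact mul_pos (by positivity) (hfj.trans_le (single_le_sum hf hj))

section Scheduling

variable {N : Type*} (A : N → Finset N) (b : N → N → ℝ)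

theorem linear_constraints_iff_forall_not_active_chain
    (hsymm : ∀ n m, m ∈ A n ↔ n ∈ A m)
    (hbin : ∀ n m, b n m = 0 ∨ b n m = 1)
    (hsupp : ∀ n m, m ∉ A n → b n m = 0) :
    (∀ n : N, ∀ m ∈ A n, b n m + 1 / (#(A n) : ℝ) * ∑ m' ∈ A n, b m' n ≤ 1) ↔
      ∀ n m k, b n m = 1 → ¬ b m k = 1 := by
  have mem_of_active : ∀ {n m}, b n m = 1 → m ∈ A n := fun {n m} h => by
    by_contra hm
    simp [hsupp n m hm] at h
  have hnonneg : ∀ n m, 0 ≤ b n m := fun n m => by rcases hbin n m with h | h <;> simp [h]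
  have hle_one : ∀ n m, b n m ≤ 1 := fun n m => by rcases hbin n m with h | h <;> simp [h]
  constructor
  · intro hc n m k hnm hmk
    have hin : n ∈ A m := (hsymm n m).1 (mem_of_active hnm)
    have hpos := one_div_card_mul_sum_pos (fun i _ => hnonneg i m) hin (by rw [hnm]; exact one_pos)
    linarith [hc m k (mem_of_active hmk)]
  · intro h n m _
    rcases hbin n m with hnm | hnm
    · rw [hnm, zero_add]
      exact one_div_card_mul_sum_le_one fun i _ => hle_one i n
    · have hin : ∑ m' ∈ A n, b m' n = 0 :=
        sum_eq_zero fun i _ => (hbin i n).resolve_right fun hin => h i n m hin hnm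
      simp [hnm, hin]

end Scheduling

theorem stmt_5_general {N : Type*}
    (A : N → Finset N)
    (hsymm : ∀ n m, m ∈ A n ↔ n ∈ A m)
    (b : N → N → ℝ)
    (hbin : ∀ n m, b n m = 0 ∨ b n m = 1)
    (hsupp : ∀ n m, m ∉ A n → b n m = 0) :
    (∀ n : N, ∀ m ∈ A n,
        b n m + (1 / ((A n).card : ℝ)) * ∑ m' ∈ A n, b m' n ≤ 1) ↔
    (∃ s : N → Bool, ∀ n m, b n m = 1 → s n = true ∧ s m = false) :=
  (linear_constraints_iff_forall_not_active_chain A b hsymm hbin hsupp).trans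
    (exists_state_iff_forall_not_chain fun n m => b n m = 1).symm

/-- The linear MILP constraints `b(n,m) + (1/|A(n)|)·∑_{m'∈A(n)} b(m',n) ≤ 1` on binary
link-activation variables hold iff the active links form a Directed Bipartite SubGraph:
there is a transmit/receive state assignment `s` such that every active link goes from a
transmitting node to a receiving node. -/
theorem stmt_5 {N : Type*} [Fintype N] [DecidableEq N]
    (A : N → Finset N)
    (hsymm : ∀ n m, m ∈ A n ↔ n ∈ A m)
    (hirr : ∀ n, n ∉ A n)
    (hne : ∀ n, (A n).Nonempty)
    (b : N → N → ℝ)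
    (hbin : ∀ n m, b n m = 0 ∨ b n m = 1)
    (hsupp : ∀ n m, m ∉ A n → b n m = 0) :
    (∀ n : N, ∀ m ∈ A n,
        b n m + (1 / ((A n).card : ℝ)) * ∑ m' ∈ A n, b m' n ≤ 1) ↔
    (∃ s : N → Bool, ∀ n m, b n m = 1 → s n = true ∧ s m = false) :=
  stmt_5_general A hsymm b hbin hsupp
end

section
/- Let N be a finite set of nodes and A : N → Finset N a symmetric adjacency structure (m ∈ A(n) ↔ n ∈ A(m), n ∉ A(n), and A(n) nonempty for every n), and let w : N × N → ℝ be nonnegative link weights supported on adjacent pairs. Then the maximum of ∑_{n} ∑_{m ∈ A(n)} b(n,m)·w(n,m) over all binary b : N × N → {0,1} supported on adjacent pairs and satisfying b(n,m) + (1/|A(n)|)·∑_{m' ∈ A(n)} b(m',n) ≤ 1 for all n and all m ∈ A(n), equals the maximum over all state assignments s : N → {0,1} of ∑_{(n,m) : m ∈ A(n), s(n)=1, s(m)=0} w(n,m). -/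
/-!
A state vector `s` induces a feasible point of the MILP: put `b n m = 1` exactly on the active
links of its DBSG. A transmitter has no incoming active link, so the incoming term of its
constraints vanishes; a receiver has no outgoing active link, and its incoming term is at most
`1`. Both objectives then agree.

Conversely, let `b` be feasible and call `n` a transmitter when some `b n m = 1`. If `b n m = 1`
then `m` is no transmitter: the incoming sum at `m` is at least `1`, so `(1 / |A m|) * ∑` is
positive and forces every `b m m''` below `1`. Hence every active link of `b` is an active link
of the DBSG of these states, and with `w ≥ 0` the DBSG weight dominates the MILP objective.
Since there are finitely many states, the DBSG maximum exists and is the common optimum.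
-/

open scoped Classical

open Finset

noncomputable section

namespace DBSG

variable {N : Type*} (A : N → Finset N)

def HalfDuplex (b : N → N → ℝ) : Prop :=
  ∀ n, ∀ m ∈ A n, b n m + (1 / ((A n).card : ℝ)) * ∑ m' ∈ A n, b m' n ≤ 1

def linkIndicator (s : N → Bool) (n m : N) : ℝ :=
  if m ∈ A n ∧ s n = true ∧ s m = false then 1 else 0

def weight [Fintype N] (w : N → N → ℝ) (s : N → Bool) : ℝ :=
  ∑ n : N, ∑ m ∈ (A n).filter (fun m => s n = true ∧ s m = false), w n m

def transmitState (b : N → N → ℝ) (n : N) : Bool :=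
  decide (∃ m ∈ A n, b n m = 1)

theorem linkIndicator_binary (s : N → Bool) (n m : N) :
    linkIndicator A s n m = 0 ∨ linkIndicator A s n m = 1 := by
  unfold linkIndicator
  split_ifs <;> simp

theorem linkIndicator_le_one (s : N → Bool) (n m : N) : linkIndicator A s n m ≤ 1 := by
  unfold linkIndicator
  split_ifs <;> norm_num

theorem linkIndicator_eq_zero_of_not_mem (s : N → Bool) {n m : N} (hm : m ∉ A n) :
    linkIndicator A s n m = 0 :=
  if_neg fun h => hm h.1

theorem halfDuplex_linkIndicator (s : N → Bool) : HalfDuplex A (linkIndicator A s) := by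
  intro n m _
  cases hsn : s n
  · have hout : linkIndicator A s n m = 0 := if_neg (by simp [hsn])
    have hin : ∑ m' ∈ A n, linkIndicator A s m' n ≤ (A n).card := by
      simpa using sum_le_sum fun m' _ => linkIndicator_le_one A s m' n
    rw [hout, zero_add]
    calc (1 / ((A n).card : ℝ)) * ∑ m' ∈ A n, linkIndicator A s m' n
        ≤ (1 / ((A n).card : ℝ)) * (A n).card := by gcongr
      _ ≤ 1 := by rcases eq_or_ne ((A n).card : ℝ) 0 with h | h <;> simp [h]
  · have hin : ∑ m' ∈ A n, linkIndicator A s m' n = 0 :=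
      sum_eq_zero fun m' _ => if_neg (by simp [hsn])
    rw [hin, mul_zero, add_zero]
    exact linkIndicator_le_one A s n m

theorem sum_linkIndicator_mul [Fintype N] (w : N → N → ℝ) (s : N → Bool) :
    ∑ n : N, ∑ m ∈ A n, linkIndicator A s n m * w n m = weight A w s := by
  refine sum_congr rfl fun n _ => ?_
  rw [sum_filter]
  refine sum_congr rfl fun m hm => ?_
  by_cases h : s n = true ∧ s m = false <;> simp [linkIndicator, hm, h]

variable {A}

theorem lt_one_of_halfDuplex_of_receives {b : N → N → ℝ} (hb : ∀ n m, 0 ≤ b n m)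
    (hhd : HalfDuplex A b) {n m m'' : N} (hn : n ∈ A m) (hbn : b n m = 1) (hm'' : m'' ∈ A m) :
    b m m'' < 1 := by
  have hin : 1 ≤ ∑ m' ∈ A m, b m' m :=
    hbn.symm.le.trans (single_le_sum (fun i _ => hb i m) hn)
  have hcard : (0 : ℝ) < (A m).card := by exact_mod_cast card_pos.mpr ⟨n, hn⟩
  have hpos : 0 < (1 / ((A m).card : ℝ)) * ∑ m' ∈ A m, b m' m :=
    mul_pos (by positivity) (zero_lt_one.trans_le hin)
  linarith [hhd m m'' hm'']

theorem transmitState_of_eq_one (hsymm : ∀ n m, m ∈ A n ↔ n ∈ A m) {b : N → N → ℝ}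
    (hbin : ∀ n m, b n m = 0 ∨ b n m = 1) (hhd : HalfDuplex A b) {n m : N} (hm : m ∈ A n)
    (hbnm : b n m = 1) : transmitState A b n = true ∧ transmitState A b m = false := by
  have hb : ∀ n m, 0 ≤ b n m := fun n m => (hbin n m).elim (·.ge) (· ▸ zero_le_one)
  refine ⟨decide_eq_true ⟨m, hm, hbnm⟩, decide_eq_false ?_⟩
  rintro ⟨m'', hm'', h⟩
  exact (lt_one_of_halfDuplex_of_receives hb hhd ((hsymm n m).mp hm) hbnm hm'').ne h

theorem sum_mul_le_weight_transmitState [Fintype N] (hsymm : ∀ n m, m ∈ A n ↔ n ∈ A m)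
    {w : N → N → ℝ} (hw : ∀ n m, 0 ≤ w n m) {b : N → N → ℝ}
    (hbin : ∀ n m, b n m = 0 ∨ b n m = 1) (hhd : HalfDuplex A b) :
    ∑ n : N, ∑ m ∈ A n, b n m * w n m ≤ weight A w (transmitState A b) := by
  refine sum_le_sum fun n _ => ?_
  rw [sum_filter]
  refine sum_le_sum fun m hm => ?_
  rcases hbin n m with h | h
  · rw [h, zero_mul]
    split_ifs
    exacts [hw n m, le_rfl]
  · rw [h, one_mul, if_pos (transmitState_of_eq_one hsymm hbin hhd hm h)]

end DBSG

end

open DBSG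

theorem stmt_7_general {N : Type*} [Fintype N]
    (A : N → Finset N)
    (hsymm : ∀ n m, m ∈ A n ↔ n ∈ A m)
    (w : N → N → ℝ)
    (hw : ∀ n m, 0 ≤ w n m) :
    ∃ v : ℝ,
      IsGreatest {v : ℝ | ∃ b : N → N → ℝ,
          (∀ n m, b n m = 0 ∨ b n m = 1) ∧
          (∀ n m, m ∉ A n → b n m = 0) ∧
          (∀ n : N, ∀ m ∈ A n,
            b n m + (1 / ((A n).card : ℝ)) * ∑ m' ∈ A n, b m' n ≤ 1) ∧
          v = ∑ n : N, ∑ m ∈ A n, b n m * w n m} v ∧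
      IsGreatest {v : ℝ | ∃ s : N → Bool,
          v = ∑ n : N, ∑ m ∈ (A n).filter (fun m => s n = true ∧ s m = false),
            w n m} v := by
  obtain ⟨s₀, hs₀⟩ := Finite.exists_max (weight A w)
  refine ⟨weight A w s₀, ⟨?_, ?_⟩, ⟨s₀, rfl⟩, ?_⟩
  · exact ⟨linkIndicator A s₀, linkIndicator_binary A s₀,
      fun _ _ => linkIndicator_eq_zero_of_not_mem A s₀, halfDuplex_linkIndicator A s₀,
      (sum_linkIndicator_mul A w s₀).symm⟩
  · rintro v ⟨b, hbin, -, hhd, rfl⟩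
    exact (sum_mul_le_weight_transmitState hsymm hw hbin hhd).trans (hs₀ _)
  · rintro v ⟨s, rfl⟩
    exact hs₀ s

/-- The optimal value of the MILP (maximizing total active-link weight over binary
variables satisfying the linear half-duplex constraints) equals the optimal value of the
Maximum Weighted Directed Bipartite SubGraph problem (maximizing over transmit/receive
state assignments `s`). -/
theorem stmt_7 {N : Type*} [Fintype N] [DecidableEq N]
    (A : N → Finset N)
    (hsymm : ∀ n m, m ∈ A n ↔ n ∈ A m)
    (hirr : ∀ n, n ∉ A n)
    (hne : ∀ n, (A n).Nonempty)
    (w : N → N → ℝ)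
    (hw : ∀ n m, 0 ≤ w n m)
    (hwsupp : ∀ n m, m ∉ A n → w n m = 0) :
    ∃ v : ℝ,
      IsGreatest {v : ℝ | ∃ b : N → N → ℝ,
          (∀ n m, b n m = 0 ∨ b n m = 1) ∧
          (∀ n m, m ∉ A n → b n m = 0) ∧
          (∀ n : N, ∀ m ∈ A n,
            b n m + (1 / ((A n).card : ℝ)) * ∑ m' ∈ A n, b m' n ≤ 1) ∧
          v = ∑ n : N, ∑ m ∈ A n, b n m * w n m} v ∧
      IsGreatest {v : ℝ | ∃ s : N → Bool,
          v = ∑ n : N, ∑ m ∈ (A n).filter (fun m => s n = true ∧ s m = false),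
            w n m} v :=
  stmt_7_general A hsymm w hw
end
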